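/- arXiv:2203.12231 — 3 statements merged into one kernel-verified Lean document; each statement's English description precedes it below -/
import Mathlib

section
/- Let (B, B', ⟨·,·⟩, k) be an RKBS with kernel on X such that {k(x,·) : x ∈ X} is linearly independent, and let f : X → X. Define the Perron–Frobenius operator K_f on Span{k(x,·) : x ∈ X} by linearly extending K_f k(x,·) := k(f(x),·), and the Koopman operator U_f g := g ∘ f on D(U_f) = {g ∈ B : g ∘ f ∈ B}. Then K_f is densely defined with respect to ⟨·,·⟩ (i.e. ⟨g,h⟩ = 0 for all h ∈ Span{k(x,·)} implies g = 0), and U_f equals the adjoint of K_f with respect to the bilinear form: g ∈ D(K_f') if and only if g ∘ f ∈ B, in which case K_f' g = g ∘ f. -/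
/-- For an RKBS with kernel `(B, B', ⟨·,·⟩, k)` on `X` with linearly
independent kernel family, the Perron–Frobenius operator `K_f` (linear extension of
`k(x,·) ↦ k(f(x),·)` on the span of the kernel functions) is densely defined with respect
to the bilinear form, and the Koopman operator is its adjoint: `g` lies in the domain of
`K_f'` iff `g ∘ f ∈ B`, in which case `K_f' g = g ∘ f`. -/
theorem koopman_is_adjoint_of_perronFrobenius
    {X B B' : Type*}
    [NormedAddCommGroup B] [NormedSpace ℂ B] [CompleteSpace B]
    [NormedAddCommGroup B'] [NormedSpace ℂ B'] [CompleteSpace B']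
    (incl : B →ₗ[ℂ] (X → ℂ)) (hinj : Function.Injective incl)
    (heval : ∀ x : X, Continuous fun g : B => incl g x)
    (pair : B →L[ℂ] B' →L[ℂ] ℂ)
    (K : X → B')
    (hrep : ∀ (g : B) (x : X), pair g (K x) = incl g x)
    (hli : LinearIndependent ℂ K)
    (f : X → X)
    (Kf : (Submodule.span ℂ (Set.range K)) →ₗ[ℂ] B')
    (hKf : ∀ x : X,
      Kf ⟨K x, Submodule.subset_span (Set.mem_range_self x)⟩ = K (f x)) :
    -- K_f is densely defined with respect to ⟨·,·⟩:
    (∀ g : B, (∀ h : Submodule.span ℂ (Set.range K), pair g (h : B') = 0) → g = 0) ∧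
    -- g ∈ D(K_f') ↔ g ∘ f ∈ B:
    (∀ g : B,
      (∃ u : B, ∀ h : Submodule.span ℂ (Set.range K), pair g (Kf h) = pair u (h : B')) ↔
      (∃ u : B, incl u = fun x => incl g (f x))) ∧
    -- and in that case K_f' g = g ∘ f:
    (∀ g u : B,
      (∀ h : Submodule.span ℂ (Set.range K), pair g (Kf h) = pair u (h : B')) →
      incl u = fun x => incl g (f x)) := by
  -- key: the adjoint relation holds for all h in the span iff it holds on generators
  have key : ∀ g u : B,
      (∀ x : X, incl u x = incl g (f x)) →
      ∀ h : Submodule.span ℂ (Set.range K), pair g (Kf h) = pair u (h : B') := by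
    intro g u hu h
    -- compare two linear maps on the span
    let L1 : (Submodule.span ℂ (Set.range K)) →ₗ[ℂ] ℂ :=
      (pair g).toLinearMap.comp Kf
    let L2 : (Submodule.span ℂ (Set.range K)) →ₗ[ℂ] ℂ :=
      (pair u).toLinearMap.comp (Submodule.span ℂ (Set.range K)).subtype
    suffices hL : L1 = L2 by
      simpa [L1, L2] using LinearMap.congr_fun hL h
    apply LinearMap.ext
    rintro ⟨v, hv⟩
    induction hv using Submodule.span_induction with
    | mem v hvmem =>
        obtain ⟨x, rfl⟩ := hvmem
        simp only [L1, L2, LinearMap.comp_apply, ContinuousLinearMap.coe_coe,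
          Submodule.subtype_apply, hKf x]
        rw [hrep, hrep, hu]
    | zero =>
        have : (⟨(0 : B'), Submodule.zero_mem _⟩ :
            Submodule.span ℂ (Set.range K)) = 0 := rfl
        simp only [L1, L2, LinearMap.comp_apply, this, map_zero]
    | add v w hv hw ihv ihw =>
        have : (⟨v + w, Submodule.add_mem _ hv hw⟩ :
            Submodule.span ℂ (Set.range K)) =
            ⟨v, hv⟩ + ⟨w, hw⟩ := rfl
        rw [this, map_add, map_add, ihv, ihw]
    | smul c v hv ihv =>
        have : (⟨c • v, Submodule.smul_mem _ c hv⟩ :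
            Submodule.span ℂ (Set.range K)) =
            c • (⟨v, hv⟩ : Submodule.span ℂ (Set.range K)) := rfl
        rw [this, map_smul, map_smul, ihv]
  have conv : ∀ g u : B,
      (∀ h : Submodule.span ℂ (Set.range K), pair g (Kf h) = pair u (h : B')) →
      incl u = fun x => incl g (f x) := by
    intro g u hgu
    funext x
    have := hgu ⟨K x, Submodule.subset_span (Set.mem_range_self x)⟩
    simp only [hKf x] at this
    rw [hrep, hrep] at this
    exact this.symm
  refine ⟨?_, ?_, conv⟩
  · intro g hg
    apply hinj
    have : incl g = 0 := by
      funext x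
      have := hg ⟨K x, Submodule.subset_span (Set.mem_range_self x)⟩
      rw [hrep] at this
      simpa using this
    simpa using this
  · intro g
    constructor
    · rintro ⟨u, hu⟩
      exact ⟨u, conv g u hu⟩
    · rintro ⟨u, hu⟩
      exact ⟨u, key g u (fun x => congrFun hu x)⟩
end

section
/- Let f : X → X, let (B, B', ⟨·,·⟩, k) be an RKBS on X with kernel with {k(x,·) : x ∈ X} linearly independent, let g : Y → Y, and suppose φ : Y → X is a bijection with φ ∘ g = f ∘ φ (conjugacy). Let (B_φ, B'_φ, ⟨·,·⟩_φ, k_φ) be the pullback RKBS with k_φ(y₁,y₂) = k(φ(y₁),φ(y₂)) and T_φ h := h ∘ φ the isometric isomorphism B' → B'_φ. Then K_f T_φ = T_φ K_g on Span{k_φ(y,·) : y ∈ Y}. In particular, if K_f extends to a bounded operator on B', then K_g extends to a bounded operator on B'_φ with equal operator norm. -/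
/-- Conjugacy. Let `f : X → X`, `g : Y → Y` and let `φ : Y → X` be a bijection
with `φ ∘ g = f ∘ φ`.  We identify the pullback space `B'_φ` with `B'` via the isometric
isomorphism `T_φ` (so that `T_φ k_φ(y,·) = k(φ y,·)`, i.e. the pullback feature map is
`y ↦ K (φ y)`).  Under this identification the intertwining `K_f T_φ = T_φ K_g` says that
`K_f` and `K_g` agree on `Span{k_φ(y,·) : y ∈ Y}`; in particular any bound `‖K_f h‖ ≤ C‖h‖`
transfers to `K_g` and conversely, so the bounded extensions have equal operator norms. -/
theorem perronFrobenius_conjugacy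
    {X Y B' : Type*}
    [NormedAddCommGroup B'] [NormedSpace ℂ B'] [CompleteSpace B']
    (K : X → B') (hli : LinearIndependent ℂ K)
    (f : X → X) (g : Y → Y)
    (φ : Y → X) (hφ : Function.Bijective φ)
    (hconj : ∀ y : Y, φ (g y) = f (φ y))
    (Kf Kg : B' →ₗ[ℂ] B')
    (hKf : ∀ x : X, Kf (K x) = K (f x))
    (hKg : ∀ y : Y, Kg (K (φ y)) = K (φ (g y))) :
    -- K_f T_φ = T_φ K_g on the span of the pullback kernel functions:
    (∀ h ∈ Submodule.span ℂ (Set.range fun y : Y => K (φ y)), Kf h = Kg h) ∧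
    -- boundedness transfers with equal norm bound:
    (∀ C : ℝ, 0 ≤ C →
      ((∀ h ∈ Submodule.span ℂ (Set.range K), ‖Kf h‖ ≤ C * ‖h‖) ↔
       (∀ h ∈ Submodule.span ℂ (Set.range fun y : Y => K (φ y)), ‖Kg h‖ ≤ C * ‖h‖))) := by
  have hrange : (Set.range fun y : Y => K (φ y)) = Set.range K := by
    ext v
    constructor
    · rintro ⟨y, rfl⟩; exact ⟨φ y, rfl⟩
    · rintro ⟨x, rfl⟩
      obtain ⟨y, rfl⟩ := hφ.2 x
      exact ⟨y, rfl⟩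
  have hagree : ∀ h ∈ Submodule.span ℂ (Set.range fun y : Y => K (φ y)), Kf h = Kg h := by
    intro h hh
    induction hh using Submodule.span_induction with
    | mem v hv =>
      obtain ⟨y, rfl⟩ := hv
      rw [hKf, hKg, hconj]
    | zero => simp
    | add a b _ _ ha hb => simp [ha, hb]
    | smul c a _ ha => simp [ha]
  refine ⟨hagree, fun C _ => ?_⟩
  constructor
  · intro hb h hh
    rw [← hagree h hh]
    exact hb h (by rwa [← hrange])
  · intro hb h hh
    rw [hagree h (by rwa [hrange])]
    exact hb h (by rwa [hrange])
end

section
/- Let H be an RKHS on an open set X ⊂ ℝⁿ with kernel k ∈ C¹(X × X), linearly independent kernel family, and let φ_t be the flow of ẋ = f(x) for a locally Lipschitz vector field f leaving X positively invariant. Suppose the Perron–Frobenius semigroup K_t k(x,·) := k(φ_t(x),·) extends to bounded operators on H with ‖K_t‖ ≤ e^{ωt} for all t ≥ 0 and some ω > 0. Then for all n ∈ ℕ, a₁,…,aₙ ∈ ℂ and x₁,…,xₙ ∈ X: Re ∑_{i,j=1}^n ∑_{l=1}^n aᵢ a̅ⱼ f_l(xᵢ) ∂_{x_l} k(xᵢ,xⱼ)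 ≤ ω ∑_{i,j=1}^n aᵢ a̅ⱼ k(xᵢ,xⱼ), where ∂_{x_l} denotes the partial derivative of k in the l-th coordinate of the first variable. -/
open scoped InnerProductSpace ComplexConjugate NNReal

open Finset Filter Topology

/-!
Pair `g = ∑ aᵢ k(xᵢ,·)` with the curve `G t = K_t g = ∑ aᵢ k(φ_t xᵢ,·)`. The function
`t ↦ ‖G t‖²` agrees with `t ↦ e^{2ωt}‖g‖²` at `t = 0` and lies below it for `t > 0`, so its
right derivative `2 Re ⟪g, G'(0)⟫` at `0` is at most `2ω‖g‖²`. Expanding both inner products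
over the kernel family gives the two double sums.
-/

theorem HasDerivAt.le_of_eventually_le_of_eq {u v : ℝ → ℝ} {u' v' a : ℝ}
    (hu : HasDerivAt u u' a) (hv : HasDerivAt v v' a) (heq : u a = v a)
    (hle : ∀ᶠ t in 𝓝[>] a, u t ≤ v t) : u' ≤ v' := by
  have hslope : Tendsto (slope (v - u) a) (𝓝[>] a) (𝓝 (v' - u')) :=
    (hasDerivAt_iff_tendsto_slope.mp (hv.sub hu)).mono_left
      (nhdsWithin_mono a fun _ ht => ne_of_gt ht)
  have : 0 ≤ v' - u' := by
    refine ge_of_tendsto hslope ?_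
    filter_upwards [hle, self_mem_nhdsWithin] with t ht hat
    rw [slope_def_field]
    simp only [Pi.sub_apply, heq, sub_self, sub_zero]
    exact div_nonneg (sub_nonneg.mpr ht) (sub_nonneg.mpr (le_of_lt hat))
  linarith

theorem inner_deriv_le_of_norm_le_exp_mul {F : Type*} [NormedAddCommGroup F]
    [InnerProductSpace ℝ F] {G : ℝ → F} {G' : F} {ω : ℝ} (hG : HasDerivAt G G' 0)
    (hgrowth : ∀ᶠ t in 𝓝[>] 0, ‖G t‖ ≤ Real.exp (ω * t) * ‖G 0‖) :
    ⟪G 0, G'⟫_ℝ ≤ ω * ‖G 0‖ ^ 2 := by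
  have hbound : HasDerivAt (fun t => (Real.exp (ω * t) * ‖G 0‖) ^ 2)
      (2 * ω * ‖G 0‖ ^ 2) 0 := by
    refine ((((hasDerivAt_id (0 : ℝ)).const_mul ω).exp).mul_const ‖G 0‖).fun_pow 2
      |>.congr_deriv ?_
    simp
    ring
  have := hG.norm_sq.le_of_eventually_le_of_eq hbound (by simp) <| hgrowth.mono
    fun t ht => pow_le_pow_left₀ (norm_nonneg _) ht 2
  linarith

theorem inner_sum_smul_sum_smul {𝕜 E ι : Type*} [RCLike 𝕜] [NormedAddCommGroup E]
    [InnerProductSpace 𝕜 E] [Fintype ι] (a : ι → 𝕜) (u v : ι → E) :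
    ⟪∑ j, a j • u j, ∑ i, a i • v i⟫_𝕜 = ∑ i, ∑ j, a i * conj (a j) * ⟪u j, v i⟫_𝕜 := by
  simp only [sum_inner, inner_sum, inner_smul_left, inner_smul_right, mul_sum]
  exact sum_congr rfl fun i _ => sum_congr rfl fun j _ => by ring

theorem inner_apply_eq_sum_single {E : Type*} [NormedAddCommGroup E]
    [InnerProductSpace ℂ E] {n : ℕ}
    (L : EuclideanSpace ℝ (Fin n) →L[ℝ] E) (w : E) (v : EuclideanSpace ℝ (Fin n)) :
    ⟪w, L v⟫_ℂ = ∑ l, ((v l : ℝ) : ℂ) * ⟪w, L (EuclideanSpace.single l 1)⟫_ℂ := by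
  conv_lhs => rw [← (EuclideanSpace.basisFun (Fin n) ℝ).sum_repr v]
  simp only [map_sum, map_smul, inner_sum, ← Complex.coe_smul,
    inner_smul_right, EuclideanSpace.basisFun_apply, EuclideanSpace.basisFun_repr]

theorem dissipativity_of_semigroup_bound_general
    {n : ℕ} {H : Type*}
    [NormedAddCommGroup H] [InnerProductSpace ℂ H]
    (Ω : Set (EuclideanSpace ℝ (Fin n)))
    (K : EuclideanSpace ℝ (Fin n) → H)
    (DK : EuclideanSpace ℝ (Fin n) → (EuclideanSpace ℝ (Fin n) →L[ℝ] H))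
    (hC1 : ∀ x ∈ Ω, HasFDerivAt K (DK x) x)
    (f : EuclideanSpace ℝ (Fin n) → EuclideanSpace ℝ (Fin n))
    (φ : ℝ → EuclideanSpace ℝ (Fin n) → EuclideanSpace ℝ (Fin n))
    (hφ0 : ∀ x ∈ Ω, φ 0 x = x)
    (hφode : ∀ x ∈ Ω, ∀ t ≥ (0:ℝ), HasDerivAt (fun s => φ s x) (f (φ t x)) t)
    (ω : ℝ)
    (Kt : ℝ → (H →L[ℂ] H))
    (hKt : ∀ t ≥ (0:ℝ), ∀ x ∈ Ω, Kt t (K x) = K (φ t x))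
    (hKtbound : ∀ t ≥ (0:ℝ), ‖Kt t‖ ≤ Real.exp (ω * t)) :
    ∀ (m : ℕ) (a : Fin m → ℂ) (x : Fin m → EuclideanSpace ℝ (Fin n)),
      (∀ i, x i ∈ Ω) →
      (∑ i, ∑ j, a i * conj (a j) *
          ∑ l : Fin n, ((f (x i) l : ℝ) : ℂ) *
            ⟪K (x j), DK (x i) (EuclideanSpace.single l 1)⟫_ℂ).re ≤
        ω * (∑ i, ∑ j, a i * conj (a j) * ⟪K (x j), K (x i)⟫_ℂ).re := by
  intro m a x hx
  set g : H := ∑ i, a i • K (x i)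
  let G : ℝ → H := fun t => ∑ i, a i • K (φ t (x i))
  have hG0 : G 0 = g := by simp only [G, g, hφ0 _ (hx _)]
  have hderiv : HasDerivAt G (∑ i, a i • DK (x i) (f (x i))) 0 := by
    refine HasDerivAt.fun_sum fun i _ => HasDerivAt.const_smul (a i) ?_
    have hK : HasFDerivAt K (DK (x i)) (φ 0 (x i)) := by
      rw [hφ0 _ (hx i)]
      exact hC1 _ (hx i)
    simpa only [Function.comp_def, hφ0 _ (hx i)] using
      hK.comp_hasDerivAt 0 (hφode _ (hx i) 0 le_rfl)
  have hgrowth : ∀ t > 0, ‖G t‖ ≤ Real.exp (ω * t) * ‖G 0‖ := by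
    intro t ht
    have hGt : G t = Kt t g := by simp only [G, g, map_sum, map_smul, hKt t ht.le _ (hx _)]
    rw [hGt, hG0]
    exact (Kt t).le_of_opNorm_le (hKtbound t ht.le) g
  simp_rw [← inner_apply_eq_sum_single]
  rw [← inner_sum_smul_sum_smul, ← inner_sum_smul_sum_smul]
  let _ := InnerProductSpace.complexToReal (G := H)
  have key := inner_deriv_le_of_norm_le_exp_mul hderiv (eventually_nhdsWithin_of_forall hgrowth)
  rwa [hG0, real_inner_eq_re_inner, ← inner_self_eq_norm_sq (𝕜 := ℂ)] at key

/-- Dissipativity-type inequality from the exponential bound on the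
Perron–Frobenius semigroup.  `H` is an RKHS on an open set `Ω ⊆ ℝⁿ` realized by a C¹
feature map `K` (with derivative `DK`, so that `∂_{x_l} k(x,·) = DK x (e_l)` and
`k x y = ⟪K y, K x⟫`), the kernel family is linearly independent, `φ` is the flow of
`ẋ = f(x)` for a locally Lipschitz `f` leaving `Ω` positively invariant, and the
Perron–Frobenius semigroup extends to bounded operators `K_t` on `H` with
`‖K_t‖ ≤ e^{ωt}`, `ω > 0`.  Then for all `a₁,…,aₘ ∈ ℂ`, `x₁,…,xₘ ∈ Ω`:
`Re ∑_{i,j,l} aᵢ a̅ⱼ f_l(xᵢ) ∂_{x_l}k(xᵢ,xⱼ) ≤ ω ∑_{i,j} aᵢ a̅ⱼ k(xᵢ,xⱼ)`. -/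
theorem dissipativity_of_semigroup_bound
    {n : ℕ} {H : Type*}
    [NormedAddCommGroup H] [InnerProductSpace ℂ H] [CompleteSpace H]
    (Ω : Set (EuclideanSpace ℝ (Fin n))) (hΩ : IsOpen Ω)
    (K : EuclideanSpace ℝ (Fin n) → H)
    (DK : EuclideanSpace ℝ (Fin n) → (EuclideanSpace ℝ (Fin n) →L[ℝ] H))
    (hC1 : ∀ x ∈ Ω, HasFDerivAt K (DK x) x)
    (hDKcont : ContinuousOn DK Ω)
    (hli : LinearIndependent ℂ (fun x : Ω => K x))
    (f : EuclideanSpace ℝ (Fin n) → EuclideanSpace ℝ (Fin n))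
    (hf : LocallyLipschitz f)
    (φ : ℝ → EuclideanSpace ℝ (Fin n) → EuclideanSpace ℝ (Fin n))
    (hφ0 : ∀ x ∈ Ω, φ 0 x = x)
    (hφinv : ∀ x ∈ Ω, ∀ t ≥ (0:ℝ), φ t x ∈ Ω)
    (hφode : ∀ x ∈ Ω, ∀ t ≥ (0:ℝ), HasDerivAt (fun s => φ s x) (f (φ t x)) t)
    (ω : ℝ) (hω : 0 < ω)
    (Kt : ℝ → (H →L[ℂ] H))
    (hKt : ∀ t ≥ (0:ℝ), ∀ x ∈ Ω, Kt t (K x) = K (φ t x))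
    (hKtbound : ∀ t ≥ (0:ℝ), ‖Kt t‖ ≤ Real.exp (ω * t)) :
    ∀ (m : ℕ) (a : Fin m → ℂ) (x : Fin m → EuclideanSpace ℝ (Fin n)),
      (∀ i, x i ∈ Ω) →
      (∑ i, ∑ j, a i * conj (a j) *
          ∑ l : Fin n, ((f (x i) l : ℝ) : ℂ) *
            ⟪K (x j), DK (x i) (EuclideanSpace.single l 1)⟫_ℂ).re ≤
        ω * (∑ i, ∑ j, a i * conj (a j) * ⟪K (x j), K (x i)⟫_ℂ).re :=
  dissipativity_of_semigroup_bound_general Ω K DK hC1 f φ hφ0 hφode ω Kt hKt hKtbound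
end
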